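/- Let Γ be a finite dismantlable graph with vertex set V. Call two vertices σ, ρ equivalent if N(σ) = N(ρ), and let T ⊆ V be a set containing exactly one vertex from each equivalence class. Then the subgraph of Γ induced on T is dismantlable. -/

import Mathlib

open SimpleGraph

variable {V : Type*}

/-- The closed neighbourhood of a vertex: the vertex together with all its neighbours. -/
def closedNbhd (G : SimpleGraph V) (ρ : V) : Set V := insert ρ {w | G.Adj ρ w}

/-- `ρ` is dominated by `π` within the subgraph of `G` induced on `S`:
`π ∈ S`, `π ≠ ρ`, and `N(ρ) ∩ S ⊆ N(π)`. -/
def DominatedIn (G : SimpleGraph V) (S : Set V) (ρ π : V) : Prop :=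
  π ∈ S ∧ π ≠ ρ ∧ ∀ w ∈ S, w ∈ closedNbhd G ρ → w ∈ closedNbhd G π

/-- The subgraph of `G` induced on `S` is dismantlable: the vertices of `S` can be
arranged in a (finite) list such that each vertex except the last is dominated in the
subgraph induced on it and the later vertices. -/
def DismantlableOn (G : SimpleGraph V) (S : Set V) : Prop :=
  ∃ l : List V, l.Nodup ∧ (∀ v, v ∈ l ↔ v ∈ S) ∧
    ∀ (i : ℕ) (h : i < l.length), i < l.length - 1 →
      ∃ π, DominatedIn G {w | w ∈ l.drop i} (l[i]'h) π

/-- A graph is dismantlable if the subgraph induced on all of its vertices is. -/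
def Dismantlable (G : SimpleGraph V) : Prop := DismantlableOn G Set.univ

/-- The set `Π*(ρ)` of all vertices appearing in pairs of `Π ρ`. -/
def PiStar (Pr : V → Finset (Sym2 V)) (ρ : V) : Set V := {v | ∃ p ∈ Pr ρ, v ∈ p}

/-- `Pr` is a `σ`-projection: it assigns to each vertex `ρ ≠ σ` a nonempty finite set of
unordered pairs of vertices such that (i) every finite set `R` containing a vertex other
than `σ` has an exposed vertex, and (ii) there is no cycle `ρ₀, …, ρ_{m-1}` with
`ρ_{i+1} ∈ Π*(ρ_i)` (indices mod `m`). -/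
structure IsSigmaProjection (G : SimpleGraph V) (σ : V) (Pr : V → Finset (Sym2 V)) : Prop where
  nonempty : ∀ ρ, ρ ≠ σ → (Pr ρ).Nonempty
  exposed : ∀ R : Finset V, (∃ ρ ∈ R, ρ ≠ σ) →
    ∃ ρ ∈ R, ρ ≠ σ ∧ ∃ p ∈ Pr ρ, ∀ π ∈ p,
      ∀ w ∈ R, w ∈ closedNbhd G ρ → w ∈ closedNbhd G π
  acyclic : ¬ ∃ m : ℕ, 0 < m ∧ ∃ f : ZMod m → V,
    ∀ i, f i ≠ σ ∧ f (i + 1) ∈ PiStar Pr (f i)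

/-- `R` is `Π`-convex: for every `ρ ∈ R` other than `σ`, each pair in `Π ρ` meets `R`. -/
def PiConvex (σ : V) (Pr : V → Finset (Sym2 V)) (R : Set V) : Prop :=
  ∀ ρ ∈ R, ρ ≠ σ → ∀ p ∈ Pr ρ, ∃ v ∈ p, v ∈ R

/-- The orbit `HR` of a set `R` under a group action. -/
def orbitSet (H : Type*) [Group H] [MulAction H V] (R : Set V) : Set V :=
  {x | ∃ h : H, ∃ ρ ∈ R, x = h • ρ}

/-- The geometric realization of the flag complex of `G` inside `ℝ^V`: the union over
all (nonempty) cliques of the convex hulls of the corresponding standard basis vectors. -/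
def flagRealization [DecidableEq V] (G : SimpleGraph V) : Set (V → ℝ) :=
  ⋃ (Δ : Set V) (_ : Δ.Nonempty) (_ : G.IsClique Δ),
    convexHull ℝ ((fun v => (Pi.single v 1 : V → ℝ)) '' Δ)

/-- A walk is a geodesic if its length equals the distance between its endpoints. -/
def IsGeodesic (G : SimpleGraph V) {u v : V} (p : G.Walk u v) : Prop :=
  p.length = G.dist u v

/-- `G` is `δ`-hyperbolic: for any geodesic triangle, each vertex on one side is within
distance `δ` of some vertex on the union of the other two sides. -/
def Hyperbolic (G : SimpleGraph V) (δ : ℕ) : Prop :=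
  ∀ (u v w : V) (p : G.Walk u v) (q : G.Walk v w) (r : G.Walk w u),
    IsGeodesic G p → IsGeodesic G q → IsGeodesic G r →
    ∀ t ∈ p.support, ∃ s, (s ∈ q.support ∨ s ∈ r.support) ∧ G.dist t s ≤ δ

/-- The Rips graph `Γ_D`: same vertices, two distinct vertices adjacent iff their
graph distance in `G` is at most `D`. -/
def ripsGraph (G : SimpleGraph V) (D : ℕ) : SimpleGraph V where
  Adj u v := u ≠ v ∧ G.dist u v ≤ D
  symm := by
    constructor
    intro u v h
    exact ⟨h.1.symm, by rw [SimpleGraph.dist_comm]; exact h.2⟩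
  loopless := by
    constructor
    intro v h
    exact h.1 rfl

/-- The ball of radius `r` around a set `C` of vertices. -/
def ballSet (G : SimpleGraph V) (C : Set V) (r : ℕ) : Set V :=
  {v | ∃ c ∈ C, G.dist v c ≤ r}

/-!
Send every vertex `v` to the representative `f v ∈ T` of its class, so `N(f v) = N(v)`.
Since `x ∈ N(z) ↔ z ∈ N(x)`, replacing vertices by twins preserves every relation
`w ∈ N(ρ)`; so if `π` dominates `σ` among the remaining vertices, `f π` dominates `f σ` among
their images. Hence the image under `f` of a dismantling sequence of `Γ`, keeping only the last
occurrence of each vertex, dismantles `T`: when `f σ` is removed it does not occur later, so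
`f π ≠ f σ`.
-/

section ClosedNbhd

variable {G : SimpleGraph V} {x y z : V}

lemma mem_closedNbhd_comm : x ∈ closedNbhd G y ↔ y ∈ closedNbhd G x := by
  simp only [closedNbhd, Set.mem_insert_iff, Set.mem_ofPred_eq, eq_comm, G.adj_comm]

lemma mem_closedNbhd_congr (h : closedNbhd G x = closedNbhd G y) :
    x ∈ closedNbhd G z ↔ y ∈ closedNbhd G z := by
  rw [mem_closedNbhd_comm, h, ← mem_closedNbhd_comm]

end ClosedNbhd

def IsDismantlingList (G : SimpleGraph V) : List V → Prop
  | [] => True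
  | a :: l => (l ≠ [] → ∃ π, DominatedIn G {w | w ∈ a :: l} a π) ∧ IsDismantlingList G l

section DismantlingList

variable {G : SimpleGraph V}

lemma isDismantlingList_iff (l : List V) :
    IsDismantlingList G l ↔ ∀ (i : ℕ) (h : i < l.length), i < l.length - 1 →
      ∃ π, DominatedIn G {w | w ∈ l.drop i} (l[i]'h) π := by
  induction l with
  | nil => simp [IsDismantlingList]
  | cons a l ih =>
    rw [IsDismantlingList, ih]
    constructor
    · rintro ⟨hhead, htail⟩ (_ | i) hi hi'
      · exact hhead (by rintro rfl; simp at hi')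
      · exact htail i (by simpa using hi) (by simp at hi'; omega)
    · intro h
      refine ⟨fun hne => ?_, fun i hi hi' => ?_⟩
      · exact h 0 (by simp) (by simpa using List.length_pos_iff.mpr hne)
      · exact h (i + 1) (by simp; omega) (by simp; omega)

lemma dismantlableOn_iff_exists_isDismantlingList {S : Set V} :
    DismantlableOn G S ↔
      ∃ l : List V, l.Nodup ∧ (∀ v, v ∈ l ↔ v ∈ S) ∧ IsDismantlingList G l := by
  simp only [DismantlableOn, isDismantlingList_iff]

variable {f : V → V}

lemma DominatedIn.map_of_closedNbhd_eq (hf : ∀ v, closedNbhd G (f v) = closedNbhd G v)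
    {S : Set V} {ρ π : V} (hπ : DominatedIn G S ρ π) (hne : f π ≠ f ρ) :
    DominatedIn G (f '' S) (f ρ) (f π) := by
  obtain ⟨hπS, -, hdom⟩ := hπ
  refine ⟨Set.mem_image_of_mem f hπS, hne, ?_⟩
  rintro _ ⟨u, huS, rfl⟩ hu
  rw [hf, mem_closedNbhd_congr (hf u)] at hu ⊢
  exact hdom u huS hu

lemma IsDismantlingList.dedup_map [DecidableEq V]
    (hf : ∀ v, closedNbhd G (f v) = closedNbhd G v) {l : List V}
    (hl : IsDismantlingList G l) : IsDismantlingList G (l.map f).dedup := by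
  induction l with
  | nil => trivial
  | cons a l ih =>
    obtain ⟨hhead, htail⟩ := hl
    rw [List.map_cons]
    by_cases hfa : f a ∈ l.map f
    · rw [List.dedup_cons_of_mem hfa]
      exact ih htail
    · rw [List.dedup_cons_of_notMem hfa]
      refine ⟨fun hne => ?_, ih htail⟩
      have hl : l ≠ [] := by rintro rfl; simp at hne
      obtain ⟨π, hπ⟩ := hhead hl
      have hπl : π ∈ l := (List.mem_cons.mp hπ.1).resolve_left hπ.2.1
      have hfπ : f π ≠ f a := fun h => hfa (h ▸ List.mem_map_of_mem hπl)
      have himage : {w | w ∈ f a :: (l.map f).dedup} = f '' {w | w ∈ a :: l} := by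
        ext w
        simp [List.mem_dedup, eq_comm]
      exact ⟨f π, himage ▸ hπ.map_of_closedNbhd_eq hf hfπ⟩

lemma DismantlableOn.image (hf : ∀ v, closedNbhd G (f v) = closedNbhd G v) {S : Set V}
    (hS : DismantlableOn G S) : DismantlableOn G (f '' S) := by
  classical
  rw [dismantlableOn_iff_exists_isDismantlingList] at hS ⊢
  obtain ⟨l, -, hlS, hl⟩ := hS
  refine ⟨(l.map f).dedup, List.nodup_dedup _, fun v => ?_, hl.dedup_map hf⟩
  simp [List.mem_dedup, hlS]

end DismantlingList

theorem dismantlableOn_transversal {V : Type*} (G : SimpleGraph V)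
    (hG : Dismantlable G) (T : Set V)
    (hT : ∀ v : V, ∃! w, w ∈ T ∧ closedNbhd G v = closedNbhd G w) :
    DismantlableOn G T := by
  choose f hfT hfN using fun v => (hT v).exists
  have hT_eq : f '' Set.univ = T := by
    refine Set.Subset.antisymm (Set.image_subset_iff.mpr fun v _ => hfT v) fun t ht => ?_
    exact ⟨t, trivial, (hT t).unique ⟨hfT t, hfN t⟩ ⟨ht, rfl⟩⟩
  rw [← hT_eq]
  exact hG.image fun v => (hfN v).symm
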